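/- For every fixed β > 0, if the edge-probability function satisfies p(n) ≥ ln n / n, then with high probability a graph G sampled from G(n,p) has the property that every vertex set U with |U| ≤ 12βn spans at most 50β·np·|U| edges, i.e. e_G(U) ≤ 50β·np·|U|. -/

import Mathlib

/-!
Union bound. A set `U` of size `u` spanning more than `K u` edges, `K = 50βnp`, contains
`m = ⌊K u⌋ + 1` edges among its at most `u²` pairs, which has probability at most
`C(u², m) pᵐ ≤ (e u² p / m)ᵐ ≤ (e u / 50βn)ᵐ`. As `u ≤ 12βn` the base is at most `12e/50 < 1`,
and `m ≥ k u` for `k = ⌊50β ln n⌋` because `np ≥ ln n`. With `C(n, u) ≤ (e n / u)ᵘ`, the sets of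
size `u` contribute at most `sᵘ`, where `s = e²/(50β) · (12e/50)^(k-1) → 0`; summing the
geometric series bounds the failure probability by `s / (1 - s) → 0`.
-/

open Filter Finset SimpleGraph
open scoped Classical

/-- The probability weight of a particular graph `G` on `[n]` under `G(n,p)`. -/
noncomputable def gnpWeight (n : ℕ) (p : ℝ) (G : SimpleGraph (Fin n)) : ℝ :=
  p ^ G.edgeFinset.card * (1 - p) ^ (n.choose 2 - G.edgeFinset.card)

/-- The probability that a random graph `G ~ G(n,p)` satisfies the predicate `A`. -/
noncomputable def gnpProb (n : ℕ) (p : ℝ) (A : SimpleGraph (Fin n) → Prop) : ℝ :=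
  ∑ G : SimpleGraph (Fin n), if A G then gnpWeight n p G else 0

/-- A sequence of graph properties holds with high probability in `G(n, p n)`. -/
def WHP (p : ℕ → ℝ) (A : ∀ n : ℕ, SimpleGraph (Fin n) → Prop) : Prop :=
  Tendsto (fun n => gnpProb n (p n) (A n)) atTop (nhds 1)

/-- Number of edges of a graph. -/
noncomputable def edgeCount {V : Type*} [Fintype V] (G : SimpleGraph V) : ℕ :=
  G.edgeFinset.card

/-- Number of edges with both endpoints in `U`. -/
noncomputable def eIn {V : Type*} [Fintype V] (G : SimpleGraph V) (U : Finset V) : ℕ :=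
  (G.edgeFinset.filter (fun e => ∀ v ∈ e, v ∈ U)).card

/-- Number of edges with one endpoint in `U` and the other in `Z` (for disjoint `U`, `Z`). -/
noncomputable def eBetween {V : Type*} [Fintype V] (G : SimpleGraph V) (U Z : Finset V) : ℕ :=
  ((U ×ˢ Z).filter (fun q => G.Adj q.1 q.2)).card

/-- External neighbourhood of a vertex set. -/
noncomputable def extNbhd {V : Type*} [Fintype V] (G : SimpleGraph V) (U : Finset V) : Finset V :=
  Finset.univ.filter (fun v => v ∉ U ∧ ∃ u ∈ U, G.Adj u v)

/-- `G` is an `(R, f)`-expander: every set `U` with `|U| ≤ R` satisfies `|N(U)| ≥ f(|U|)·|U|`. -/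
def IsExpander {V : Type*} [Fintype V] (G : SimpleGraph V) (R : ℝ) (f : ℕ → ℝ) : Prop :=
  ∀ U : Finset V, U.Nonempty → (U.card : ℝ) ≤ R →
    f U.card * U.card ≤ ((extNbhd G U).card : ℝ)

/-- The expansion function `f_β` on `{1, …, ⌊β n₁⌋}`. -/
noncomputable def fBeta (β : ℝ) (n1 : ℕ) (t : ℕ) : ℝ :=
  if t = Nat.floor (β * n1) then 2 * (1 + 39 * β) / (3 * β)
  else if (t : ℝ) < (n1 : ℝ) ^ (0.1 : ℝ) then Real.log n1 ^ (0.8 : ℝ)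
  else 11

/-- `G₁` is `(n₁, d, β)`-quasi-random. -/
def QuasiRandom {V : Type*} [Fintype V] (G1 : SimpleGraph V) (n1 : ℕ) (d β : ℝ) : Prop :=
  (∀ v : V, d / 150 ≤ (G1.degree v : ℝ)) ∧
  (∀ U : Finset V, (U.card : ℝ) < (n1 : ℝ) ^ (0.11 : ℝ) * Real.log n1 →
    (eIn G1 U : ℝ) ≤ d ^ (0.13 : ℝ) * U.card) ∧
  (∀ U : Finset V, (U.card : ℝ) < 12 * β * n1 →
    (eIn G1 U : ℝ) ≤ 50 * β * d * U.card) ∧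
  (∀ U Z : Finset V, Disjoint U Z → U.card = Nat.floor (β * n1) →
    Z.card = Nat.floor ((1 / 3 - 27 * β) * n1) →
    (n1 : ℝ) * Real.log (Real.log n1) ≤ (eBetween G1 U Z : ℝ))

/-- Longest path length in `G`. -/
noncomputable def longestPath {V : Type*} [Fintype V] (G : SimpleGraph V) : ℕ :=
  sSup {l : ℕ | ∃ (u v : V) (q : G.Walk u v), q.IsPath ∧ q.length = l}

/-- `{u, v}` is a booster with respect to `Γ`. -/
def IsBooster {V : Type*} [Fintype V] (Γ : SimpleGraph V) (u v : V) : Prop :=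
  u ≠ v ∧ ¬ Γ.Adj u v ∧
    ((Γ ⊔ fromEdgeSet {s(u, v)}).IsHamiltonian ∨
      longestPath Γ < longestPath (Γ ⊔ fromEdgeSet {s(u, v)}))

/-- The booster set `B_Γ(v)`. -/
noncomputable def boosterSet {V : Type*} [Fintype V] (Γ : SimpleGraph V) (v : V) : Finset V :=
  Finset.univ.filter (fun w => IsBooster Γ v w)

/-- Membership in the family `𝓛(n, β)` with witnessing partition `V = V₁ ∪ D`. -/
def InFamilyL (n : ℕ) (β : ℝ) (G : SimpleGraph (Fin n)) (V1 D : Finset (Fin n)) : Prop :=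
  Disjoint V1 D ∧ V1 ∪ D = Finset.univ ∧
  ((D.card : ℝ) ≤ (n : ℝ) ^ (0.09 : ℝ)) ∧
  (∀ u ∈ D, 2 ≤ (G.neighborFinset u ∩ V1).card) ∧
  (∀ u ∈ D, ∀ v ∈ D, ∀ q : G.Walk u v, q.IsPath → 0 < q.length →
    2 * Real.log n / (3 * Real.log (Real.log n)) < (q.length : ℝ)) ∧
  (∀ u ∈ D, ∀ q : G.Walk u u, q.IsCycle →
    2 * Real.log n / (3 * Real.log (Real.log n)) < (q.length : ℝ)) ∧
  IsExpander (G.induce (V1 : Set (Fin n))) (β * V1.card) (fBeta β V1.card)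

open Real

theorem sum_superset_pow_mul_pow {ι R : Type*} [DecidableEq ι] [CommSemiring R]
    {M S : Finset ι} (hS : S ⊆ M) (a b : R) :
    ∑ t ∈ M.powerset with S ⊆ t, a ^ #t * b ^ (#M - #t) = a ^ #S * (a + b) ^ (#M - #S) := by
  have hprod := prod_add (fun _ => a) (fun e => if e ∈ S then 0 else b) M
  have hcompl : ∀ t ∈ M.powerset, ∏ e ∈ M \ t, (if e ∈ S then 0 else b) =
      if S ⊆ t then b ^ (#M - #t) else 0 := by
    intro t ht
    split_ifs with hSt
    · rw [Finset.prod_congr rfl fun e he => if_neg fun heS => (mem_sdiff.1 he).2 (hSt heS),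
        prod_const, card_sdiff_of_subset (mem_powerset.1 ht)]
    · obtain ⟨e, heS, het⟩ := not_subset.1 hSt
      exact prod_eq_zero (mem_sdiff.2 ⟨hS heS, het⟩) (if_pos heS)
  simp only [prod_const, Finset.sum_congr rfl fun t ht => congrArg _ (hcompl t ht),
    mul_ite, mul_zero, add_ite, add_zero] at hprod
  rw [sum_filter, ← hprod, prod_ite, filter_mem_eq_inter, inter_eq_right.2 hS,
    filter_notMem_eq_sdiff, prod_const, prod_const, card_sdiff_of_subset hS]

theorem choose_le_exp_one_mul_div_pow (N m : ℕ) :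
    (N.choose m : ℝ) ≤ (exp 1 * N / m) ^ m := by
  rcases Nat.eq_zero_or_pos m with rfl | hm
  · simp
  have hfact : (m : ℝ) ^ m / m.factorial ≤ exp 1 ^ m := by
    simpa [← Real.exp_nat_mul] using Real.pow_div_factorial_le_exp _ (Nat.cast_nonneg m) m
  calc (N.choose m : ℝ) ≤ N ^ m / m.factorial := Nat.choose_le_pow_div m N
    _ = (N / m) ^ m * ((m : ℝ) ^ m / m.factorial) := by rw [div_pow]; field_simp
    _ ≤ (N / m) ^ m * exp 1 ^ m := by gcongr
    _ = (exp 1 * N / m) ^ m := by rw [← mul_pow]; ring_nf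

theorem choose_mul_pow_le_pow {n u k : ℕ} {c q : ℝ} (hc : 0 < c) (hn : n ≠ 0) (hu : u ≠ 0)
    (hk : k ≠ 0) (hq : exp 1 * u / (c * n) ≤ q) :
    (n.choose u : ℝ) * (exp 1 * u / (c * n)) ^ (k * u) ≤ (exp 1 ^ 2 / c * q ^ (k - 1)) ^ u := by
  set r := exp 1 * u / (c * n)
  have hr : 0 ≤ r := by positivity
  have hratio : exp 1 * n / u * r ^ k = exp 1 ^ 2 / c * r ^ (k - 1) := by
    have hnr : exp 1 * n / u * r = exp 1 ^ 2 / c := by simp only [r]; field_simp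
    rw [← Nat.sub_add_cancel (Nat.one_le_iff_ne_zero.2 hk), pow_succ', Nat.add_sub_cancel,
      ← mul_assoc, hnr]
  calc (n.choose u : ℝ) * r ^ (k * u) ≤ (exp 1 * n / u) ^ u * (r ^ k) ^ u := by
        rw [← pow_mul]; gcongr; exact choose_le_exp_one_mul_div_pow n u
    _ = (exp 1 ^ 2 / c * r ^ (k - 1)) ^ u := by rw [← mul_pow, hratio]
    _ ≤ (exp 1 ^ 2 / c * q ^ (k - 1)) ^ u := by gcongr

theorem eIn_empty {V : Type*} [Fintype V] (G : SimpleGraph V) : eIn G ∅ = 0 := by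
  rw [eIn, card_eq_zero, filter_eq_empty_iff]
  exact fun e _ he => notMem_empty _ (he _ e.out_fst_mem)

section Gnp

variable {n : ℕ} {p : ℝ}

theorem sum_simpleGraph_eq_sum_powerset {R : Type*} [AddCommMonoid R]
    (f : Finset (Sym2 (Fin n)) → R) :
    ∑ G : SimpleGraph (Fin n), f G.edgeFinset =
      ∑ t ∈ (⊤ : SimpleGraph (Fin n)).edgeFinset.powerset, f t := by
  refine sum_nbij' (fun G => G.edgeFinset) (fun t => fromEdgeSet t) (fun G _ => ?_)
    (fun _ _ => mem_univ _) (fun G _ => ?_) (fun t ht => ?_) (fun _ _ => rfl)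
  · exact mem_powerset.2 (edgeFinset_mono le_top)
  · simp
  · have hdiag : ∀ e ∈ t, ¬ e.IsDiag := fun e he =>
      not_isDiag_of_mem_edgeSet ⊤ (mem_edgeFinset.1 (mem_powerset.1 ht he))
    ext e
    simp only [mem_edgeFinset, edgeSet_fromEdgeSet, Set.mem_sdiff, mem_coe]
    exact ⟨fun h => h.1, fun h => ⟨h, hdiag e h⟩⟩

theorem gnpProb_edgeFinset_superset {S : Finset (Sym2 (Fin n))}
    (hS : S ⊆ (⊤ : SimpleGraph (Fin n)).edgeFinset) :
    gnpProb n p (fun G => S ⊆ G.edgeFinset) = p ^ #S := by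
  have h := sum_simpleGraph_eq_sum_powerset
    (fun t => if S ⊆ t then p ^ #t * (1 - p) ^ (n.choose 2 - #t) else 0)
  have hM : #(⊤ : SimpleGraph (Fin n)).edgeFinset = n.choose 2 := by
    rw [card_edgeFinset_top_eq_card_choose_two, Fintype.card_fin]
  calc gnpProb n p (fun G => S ⊆ G.edgeFinset)
      = ∑ t ∈ (⊤ : SimpleGraph (Fin n)).edgeFinset.powerset,
          if S ⊆ t then p ^ #t * (1 - p) ^ (n.choose 2 - #t) else 0 := by
        rw [← h, gnpProb]
        simp only [gnpWeight]
        congr!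
    _ = p ^ #S := by
        rw [← sum_filter, ← hM, sum_superset_pow_mul_pow hS, add_sub_cancel, one_pow, mul_one]

theorem sum_gnpWeight : ∑ G : SimpleGraph (Fin n), gnpWeight n p G = 1 := by
  simpa [gnpProb] using gnpProb_edgeFinset_superset (n := n) (p := p) (empty_subset _)

theorem gnpProb_add_gnpProb_not (A : SimpleGraph (Fin n) → Prop) :
    gnpProb n p A + gnpProb n p (fun G => ¬ A G) = 1 := by
  rw [gnpProb, gnpProb, ← sum_add_distrib, ← sum_gnpWeight (p := p)]
  refine sum_congr rfl fun G _ => ?_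
  by_cases hA : A G <;> simp [hA]

theorem gnpWeight_nonneg (hp0 : 0 ≤ p) (hp1 : p ≤ 1) (G : SimpleGraph (Fin n)) :
    0 ≤ gnpWeight n p G :=
  mul_nonneg (pow_nonneg hp0 _) (pow_nonneg (sub_nonneg.2 hp1) _)

theorem gnpProb_nonneg (hp0 : 0 ≤ p) (hp1 : p ≤ 1) (A : SimpleGraph (Fin n) → Prop) :
    0 ≤ gnpProb n p A :=
  sum_nonneg fun G _ => by split_ifs <;> simp [gnpWeight_nonneg hp0 hp1 G]

theorem gnpProb_mono (hp0 : 0 ≤ p) (hp1 : p ≤ 1) {A B : SimpleGraph (Fin n) → Prop}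
    (h : ∀ G, A G → B G) :
    gnpProb n p A ≤ gnpProb n p B :=
  sum_le_sum fun G _ => by
    by_cases hA : A G
    · simp [hA, h G hA]
    · split_ifs <;> simp [gnpWeight_nonneg hp0 hp1 G]

theorem gnpProb_exists_le_sum (hp0 : 0 ≤ p) (hp1 : p ≤ 1) {ι : Type*} (s : Finset ι)
    (B : ι → SimpleGraph (Fin n) → Prop) :
    gnpProb n p (fun G => ∃ i ∈ s, B i G) ≤ ∑ i ∈ s, gnpProb n p (B i) := by
  simp only [gnpProb]
  rw [sum_comm]
  refine sum_le_sum fun G _ => ?_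
  split_ifs with h
  · obtain ⟨i, hi, hBi⟩ := h
    refine (if_pos hBi).ge.trans (single_le_sum (f := fun j => if B j G then gnpWeight n p G else 0)
      (fun j _ => ?_) hi)
    split_ifs <;> simp [gnpWeight_nonneg hp0 hp1 G]
  · exact sum_nonneg fun j _ => by split_ifs <;> simp [gnpWeight_nonneg hp0 hp1 G]

theorem gnpProb_le_eIn_le_choose_mul_pow (hp0 : 0 ≤ p) (hp1 : p ≤ 1) (U : Finset (Fin n))
    (m : ℕ) : gnpProb n p (fun G => m ≤ eIn G U) ≤ ((#U ^ 2).choose m : ℝ) * p ^ m := by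
  set T := (⊤ : SimpleGraph (Fin n)).edgeFinset ∩ U.sym2
  have hwitness : ∀ G : SimpleGraph (Fin n), m ≤ eIn G U →
      ∃ S ∈ T.powersetCard m, S ⊆ G.edgeFinset := by
    intro G hG
    obtain ⟨S, hSF, hSm⟩ := exists_subset_card_eq hG
    have hSG : ∀ e ∈ S, e ∈ G.edgeFinset ∧ ∀ v ∈ e, v ∈ U := fun e he => by
      simpa only [mem_filter] using hSF he
    refine ⟨S, mem_powersetCard.2 ⟨fun e he => ?_, hSm⟩, fun e he => (hSG e he).1⟩
    exact mem_inter.2 ⟨edgeFinset_mono le_top (hSG e he).1, mem_sym2_iff.2 (hSG e he).2⟩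
  have hT : #T ≤ #U ^ 2 := by
    refine (card_le_card inter_subset_right).trans ?_
    rw [card_sym2, Nat.choose_two_right, Nat.add_sub_cancel]
    exact Nat.div_le_of_le_mul (by nlinarith)
  calc gnpProb n p (fun G => m ≤ eIn G U)
      ≤ gnpProb n p (fun G => ∃ S ∈ T.powersetCard m, S ⊆ G.edgeFinset) :=
        gnpProb_mono hp0 hp1 hwitness
    _ ≤ ∑ S ∈ T.powersetCard m, gnpProb n p (fun G => S ⊆ G.edgeFinset) :=
        gnpProb_exists_le_sum hp0 hp1 _ _
    _ = ∑ S ∈ T.powersetCard m, p ^ m := by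
        refine sum_congr rfl fun S hS => ?_
        obtain ⟨hST, hSm⟩ := mem_powersetCard.1 hS
        rw [gnpProb_edgeFinset_superset (hST.trans inter_subset_left), hSm]
    _ ≤ ((#U ^ 2).choose m : ℝ) * p ^ m := by
        rw [sum_const, card_powersetCard, nsmul_eq_mul]
        gcongr

theorem gnpProb_mul_card_lt_eIn_le {k : ℕ} {K : ℝ} (hp0 : 0 ≤ p) (hp1 : p ≤ 1) (hK : 0 < K)
    (hkK : (k : ℝ) ≤ K) {U : Finset (Fin n)} (hU : U.Nonempty) (hr : exp 1 * #U * p / K ≤ 1) :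
    gnpProb n p (fun G => K * #U < eIn G U) ≤ (exp 1 * #U * p / K) ^ (k * #U) := by
  set u := #U
  set m := ⌊K * u⌋₊ + 1
  have hu : (0 : ℝ) < u := by exact_mod_cast hU.card_pos
  have hKm : K * u < m := by exact_mod_cast Nat.lt_floor_add_one (K * u)
  have hkm : k * u ≤ m := by
    exact_mod_cast (show ((k * u : ℕ) : ℝ) ≤ m by push_cast; nlinarith)
  calc gnpProb n p (fun G => K * u < eIn G U)
      ≤ gnpProb n p (fun G => m ≤ eIn G U) :=
        gnpProb_mono hp0 hp1 fun G hG => (Nat.floor_lt (by positivity)).2 hG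
    _ ≤ ((u ^ 2).choose m : ℝ) * p ^ m := gnpProb_le_eIn_le_choose_mul_pow hp0 hp1 U m
    _ ≤ (exp 1 * (u ^ 2 : ℕ) / m * p) ^ m := by
        rw [mul_pow]; gcongr; exact choose_le_exp_one_mul_div_pow _ _
    _ ≤ (exp 1 * u * p / K) ^ m := by
        gcongr
        calc exp 1 * (u ^ 2 : ℕ) / m * p = exp 1 * u ^ 2 * p / m := by push_cast; ring
          _ ≤ exp 1 * u ^ 2 * p / (K * u) := by gcongr
          _ = exp 1 * u * p / K := by field_simp
    _ ≤ (exp 1 * u * p / K) ^ (k * u) := pow_le_pow_of_le_one (by positivity) hr hkm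

theorem sum_gnpProb_mul_card_lt_eIn_le {β s : ℝ} {k u : ℕ} (hβ : 0 < β) (hp0 : 0 < p)
    (hp1 : p ≤ 1) (hk : k ≠ 0) (hkK : (k : ℝ) ≤ 50 * β * (n * p))
    (hs : exp 1 ^ 2 / (50 * β) * (12 * exp 1 / 50) ^ (k - 1) ≤ s) (hu0 : u ≠ 0)
    (hu : (u : ℝ) ≤ 12 * β * n) :
    ∑ U ∈ powersetCard u univ, gnpProb n p (fun G => 50 * β * (n * p) * #U < eIn G U)
      ≤ s ^ u := by
  have hn0 : (0 : ℝ) < n := by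
    have : (1 : ℝ) ≤ u := by exact_mod_cast Nat.one_le_iff_ne_zero.2 hu0
    nlinarith
  have hratio : exp 1 * u * p / (50 * β * (n * p)) = exp 1 * u / (50 * β * n) := by
    field_simp
  have hr : exp 1 * u / (50 * β * n) ≤ 12 * exp 1 / 50 := by
    rw [div_le_iff₀ (by positivity)]; nlinarith [exp_pos 1]
  calc ∑ U ∈ powersetCard u univ, gnpProb n p (fun G => 50 * β * (n * p) * #U < eIn G U)
      ≤ ∑ U ∈ powersetCard u univ, (exp 1 * u / (50 * β * n)) ^ (k * u) := by
        refine sum_le_sum fun U hU => ?_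
        obtain rfl := mem_powersetCard_univ.1 hU
        rw [← hratio]
        exact gnpProb_mul_card_lt_eIn_le hp0.le hp1 (by positivity) hkK (card_ne_zero.1 hu0)
          (hratio.trans_le (hr.trans (by linarith [exp_one_lt_d9])))
    _ = (n.choose u : ℝ) * (exp 1 * u / (50 * β * n)) ^ (k * u) := by
        rw [sum_const, card_powersetCard, card_univ, Fintype.card_fin, nsmul_eq_mul]
    _ ≤ s ^ u := (choose_mul_pow_le_pow (by positivity) (Nat.cast_pos.1 hn0).ne' hu0 hk hr).trans
        (by gcongr)

theorem gnpProb_not_forall_eIn_le_le {β s : ℝ} {k : ℕ} (hβ : 0 < β) (hn : 2 ≤ n)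
    (hp : log n / n ≤ p) (hp1 : p ≤ 1) (hk : k ≠ 0) (hkn : (k : ℝ) ≤ 50 * β * log n)
    (hs : exp 1 ^ 2 / (50 * β) * (12 * exp 1 / 50) ^ (k - 1) ≤ s) (hs1 : s < 1) :
    gnpProb n p (fun G => ¬ ∀ U : Finset (Fin n), (#U : ℝ) ≤ 12 * β * n →
      (eIn G U : ℝ) ≤ 50 * β * (n * p) * #U) ≤ s / (1 - s) := by
  have hn0 : (0 : ℝ) < n := by positivity
  have hp0 : 0 < p := (div_pos (Real.log_pos (by exact_mod_cast hn)) hn0).trans_le hp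
  have hkK : (k : ℝ) ≤ 50 * β * (n * p) :=
    hkn.trans (mul_le_mul_of_nonneg_left (by rwa [div_le_iff₀' hn0] at hp) (by positivity))
  set I := Ico 1 (⌊12 * β * n⌋₊ + 1)
  calc gnpProb n p (fun G => ¬ ∀ U : Finset (Fin n), (#U : ℝ) ≤ 12 * β * n →
        (eIn G U : ℝ) ≤ 50 * β * (n * p) * #U)
      ≤ gnpProb n p (fun G => ∃ u ∈ I, ∃ U ∈ powersetCard u univ,
          50 * β * (n * p) * #U < eIn G U) := by
        refine gnpProb_mono hp0.le hp1 fun G hG => ?_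
        push Not at hG
        obtain ⟨U, hU, hdense⟩ := hG
        have hU0 : #U ≠ 0 := fun h => by
          rw [card_eq_zero.1 h, eIn_empty] at hdense; simp at hdense
        exact ⟨#U, mem_Ico.2 ⟨by omega, Nat.lt_succ_iff.2 (Nat.le_floor hU)⟩, U,
          mem_powersetCard_univ.2 rfl, hdense⟩
    _ ≤ ∑ u ∈ I, ∑ U ∈ powersetCard u univ,
          gnpProb n p (fun G => 50 * β * (n * p) * #U < eIn G U) :=
        (gnpProb_exists_le_sum hp0.le hp1 _ _).trans
          (sum_le_sum fun u _ => gnpProb_exists_le_sum hp0.le hp1 _ _)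
    _ ≤ ∑ u ∈ I, s ^ u := sum_le_sum fun u hu => by
        obtain ⟨hu1, hu2⟩ := mem_Ico.1 hu
        exact sum_gnpProb_mul_card_lt_eIn_le hβ hp0 hp1 hk hkK hs (by omega)
          ((Nat.le_floor_iff (by positivity)).1 (Nat.lt_succ_iff.1 hu2))
    _ ≤ s ^ 1 / (1 - s) :=
        geom_sum_Ico_le_of_lt_one ((by positivity : (0 : ℝ) ≤ _).trans hs) hs1
    _ = s / (1 - s) := by rw [pow_one]

end Gnp

theorem whp_of_tendsto_gnpProb_not {p : ℕ → ℝ} {A : ∀ n : ℕ, SimpleGraph (Fin n) → Prop}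
    (h : Tendsto (fun n => gnpProb n (p n) (fun G => ¬ A n G)) atTop (nhds 0)) : WHP p A := by
  have h1 : Tendsto (fun n => 1 - gnpProb n (p n) (fun G => ¬ A n G)) atTop (nhds 1) := by
    simpa using h.const_sub 1
  refine h1.congr fun n => ?_
  linarith [gnpProb_add_gnpProb_not (p := p n) (A n)]

theorem stmt13_general (β : ℝ) (hβ : 0 < β) (p : ℕ → ℝ) (hp1 : ∀ n, p n ≤ 1)
    (hp : ∀ n : ℕ, Real.log n / n ≤ p n) :
    WHP p (fun n G => ∀ U : Finset (Fin n),
      (U.card : ℝ) ≤ 12 * β * n →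
      (eIn G U : ℝ) ≤ 50 * β * ((n : ℝ) * p n) * U.card) := by
  set k : ℕ → ℕ := fun n => ⌊50 * β * log n⌋₊
  set s : ℕ → ℝ := fun n => exp 1 ^ 2 / (50 * β) * (12 * exp 1 / 50) ^ (k n - 1)
  have hk : Tendsto k atTop atTop := tendsto_nat_floor_atTop.comp <|
    (tendsto_log_atTop.comp tendsto_natCast_atTop_atTop).const_mul_atTop (by positivity)
  have hs : Tendsto s atTop (nhds 0) := by
    simpa using ((tendsto_pow_atTop_nhds_zero_of_lt_one (r := 12 * exp 1 / 50) (by positivity)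
      (by linarith [exp_one_lt_d9])).comp ((tendsto_sub_atTop_nat 1).comp hk)).const_mul
      (exp 1 ^ 2 / (50 * β))
  have hp0 (n : ℕ) : 0 ≤ p n :=
    (div_nonneg (Real.log_natCast_nonneg n) n.cast_nonneg).trans (hp n)
  refine whp_of_tendsto_gnpProb_not (squeeze_zero'
    (Eventually.of_forall fun n => gnpProb_nonneg (hp0 n) (hp1 n) _) ?_
    (by simpa using hs.div (hs.const_sub 1) (by norm_num)))
  filter_upwards [eventually_ge_atTop 2, hk.eventually_ge_atTop 1,
    hs.eventually (gt_mem_nhds one_pos)] with n hn hkn hsn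
  exact gnpProb_not_forall_eIn_le_le hβ hn (hp n) (hp1 n) (Nat.one_le_iff_ne_zero.1 hkn)
    (Nat.floor_le (by positivity)) le_rfl hsn

/-- Claim 4.7: for fixed `β > 0` and `p ≥ ln n / n`, w.h.p. every vertex set `U` with
`|U| ≤ 12βn` spans at most `50 β n p |U|` edges. -/
theorem stmt13 (β : ℝ) (hβ : 0 < β) (p : ℕ → ℝ) (hp0 : ∀ n, 0 ≤ p n) (hp1 : ∀ n, p n ≤ 1)
    (hp : ∀ n : ℕ, Real.log n / n ≤ p n) :
    WHP p (fun n G => ∀ U : Finset (Fin n),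
      (U.card : ℝ) ≤ 12 * β * n →
      (eIn G U : ℝ) ≤ 50 * β * ((n : ℝ) * p n) * U.card) :=
  stmt13_general β hβ p hp1 hp
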